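/- Fix integers k, r with k ≥ 3, a k-vertex graph F and a constant η > 0 such that one of the following holds: (1) F = K_k and r = k; (2) F = K_k, r = k−1 and η ≥ 1/k; (3) F is a tree on k vertices and r = 2; (4) F = C_k, r = 2 and η ≥ 1/k. Then for any δ, μ > 0 there exists α > 0 such that the following holds for all sufficiently large n ∈ ℕ: if G is an n-vertex graph with minimum degree δ(G) ≥ (η+μ)n and α_r(G) ≤ αn, then G contains an F-tiling covering all but at most δn vertices. -/

import Mathlib

/-!
In cases (1) and (3) the bound on `α_r` alone suffices: every set of more than about `αn`
vertices contains a copy of `F` (a `K_k` when `r = k`; for a tree, a set with no large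
independent set contains a subgraph of minimum degree `k - 1`, into which every tree on `k`
vertices embeds greedily), so a maximum tiling leaves at most `δn` vertices uncovered.

In cases (2) and (4) the uncovered set `U` of a maximum tiling spans few edges: a vertex with
many neighbours in `U` would, together with a `K_{k-1}` (resp. a path on `k - 1` vertices) among
them, form a new copy. The minimum degree `(1/k + μ)n` then forces, by double counting the edges
between `U` and the tiles, a tile with two vertices having many neighbours in `U` each. Replacing
this tile by two disjoint copies through these two vertices contradicts maximality.
-/

open Finset

namespace RTT

variable {k n : ℕ}

/-- `S` spans a copy of the `k`-vertex graph `F` in `G`: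
there is an injective graph homomorphism from `F` to `G` with image exactly `S`. -/
def SpansCopy (F : SimpleGraph (Fin k)) (G : SimpleGraph (Fin n))
    (S : Finset (Fin n)) : Prop :=
  ∃ f : Fin k → Fin n, Function.Injective f ∧
    (∀ a b, F.Adj a b → G.Adj (f a) (f b)) ∧ Finset.image f Finset.univ = S

/-- `T` is an `F`-tiling in `G`: a collection of pairwise vertex-disjoint vertex sets,
each spanning a copy of `F`. -/
def IsTiling (F : SimpleGraph (Fin k)) (G : SimpleGraph (Fin n))
    (T : Finset (Finset (Fin n))) : Prop :=
  (∀ S ∈ T, SpansCopy F G S) ∧ ∀ S ∈ T, ∀ S' ∈ T, S ≠ S' → Disjoint S S'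

/-- The induced subgraph of `G` on the vertex set `A` has a perfect `F`-tiling. -/
def PerfTilingOn (F : SimpleGraph (Fin k)) (G : SimpleGraph (Fin n))
    (A : Finset (Fin n)) : Prop :=
  ∃ T : Finset (Finset (Fin n)), IsTiling F G T ∧ T.biUnion id = A

/-- The minimum degree of `G` is at least `x`. -/
def MinDegGE (G : SimpleGraph (Fin n)) (x : ℝ) : Prop :=
  ∀ v : Fin n, x ≤ ((G.neighborSet v).ncard : ℝ)

/-- The `r`-independence number of `G` is at most `x`: every vertex set whose induced
subgraph contains no copy of `K_r` has size at most `x`. -/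
def IndepBound (G : SimpleGraph (Fin n)) (r : ℕ) (x : ℝ) : Prop :=
  ∀ S : Finset (Fin n), (∀ T ⊆ S, ¬ G.IsNClique r T) → (S.card : ℝ) ≤ x

/-- `α*(G) ≤ x`: every bipartite hole of `G` has size at most `x`. -/
def HoleBound (G : SimpleGraph (Fin n)) (x : ℝ) : Prop :=
  ∀ (s : ℕ) (U₁ U₂ : Finset (Fin n)), Disjoint U₁ U₂ → U₁.card = s → U₂.card = s →
    (∀ u ∈ U₁, ∀ v ∈ U₂, ¬ G.Adj u v) → (s : ℝ) ≤ x

/-- `A` is a `ξ`-absorbing set with respect to `V'` (for the `k`-vertex graph `F`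
in the `n`-vertex graph `G`). -/
def IsAbsorbingSet (F : SimpleGraph (Fin k)) (G : SimpleGraph (Fin n)) (ξ : ℝ)
    (V' A : Finset (Fin n)) : Prop :=
  ∀ U : Finset (Fin n), U ⊆ V' \ A → (U.card : ℝ) ≤ ξ * n →
    k ∣ (A ∪ U).card → PerfTilingOn F G (A ∪ U)

/-- `A` is an `(F,t)`-absorber for the `k`-set `S`. -/
def IsAbsorber (F : SimpleGraph (Fin k)) (G : SimpleGraph (Fin n)) (t : ℕ)
    (S A : Finset (Fin n)) : Prop :=
  Disjoint A S ∧ A.card ≤ k ^ 2 * t ∧ PerfTilingOn F G A ∧ PerfTilingOn F G (A ∪ S)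

/-- `S` has a family of at least `x` pairwise vertex-disjoint `(F,t)`-absorbers in `G`. -/
def HasManyAbsorbers (F : SimpleGraph (Fin k)) (G : SimpleGraph (Fin n)) (t : ℕ)
    (S : Finset (Fin n)) (x : ℝ) : Prop :=
  ∃ 𝒜 : Finset (Finset (Fin n)), x ≤ (𝒜.card : ℝ) ∧
    (∀ A ∈ 𝒜, IsAbsorber F G t S A) ∧
    ∀ A ∈ 𝒜, ∀ A' ∈ 𝒜, A ≠ A' → Disjoint A A'

/-- `𝒮` is an `F`-fan at `v` in `U`: a collection of pairwise disjoint `(k-1)`-sets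
`S ⊆ U \ {v}` such that `{v} ∪ S` spans a copy of `F`; its size is `𝒮.card`. -/
def IsFan (F : SimpleGraph (Fin k)) (G : SimpleGraph (Fin n)) (v : Fin n)
    (U : Finset (Fin n)) (𝒮 : Finset (Finset (Fin n))) : Prop :=
  (∀ S ∈ 𝒮, S ⊆ U.erase v ∧ S.card = k - 1 ∧ SpansCopy F G (insert v S)) ∧
    ∀ S ∈ 𝒮, ∀ S' ∈ 𝒮, S ≠ S' → Disjoint S S'

/-- `u` and `v` are `(F, m, t)`-reachable in `G`. -/
def FReachable (F : SimpleGraph (Fin k)) (G : SimpleGraph (Fin n)) (m : ℝ) (t : ℕ)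
    (u v : Fin n) : Prop :=
  ∀ W : Finset (Fin n), (W.card : ℝ) ≤ m →
    ∃ S : Finset (Fin n), Disjoint S W ∧ u ∉ S ∧ v ∉ S ∧ S.card ≤ k * t - 1 ∧
      PerfTilingOn F G (insert u S) ∧ PerfTilingOn F G (insert v S)

/-- `U` is `(F, m, t)`-closed in `G`. -/
def FClosed (F : SimpleGraph (Fin k)) (G : SimpleGraph (Fin n)) (m : ℝ) (t : ℕ)
    (U : Finset (Fin n)) : Prop :=
  ∀ u ∈ U, ∀ v ∈ U, u ≠ v → FReachable F G m t u v

/-- `P` is a partition of the vertex set of an `n`-vertex graph into `C` parts. -/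
def IsPartition {C : ℕ} (P : Fin C → Finset (Fin n)) : Prop :=
  (∀ i j, i ≠ j → Disjoint (P i) (P j)) ∧ Finset.univ.biUnion P = Finset.univ

/-- The `k`-vector `v` is `(F, β)`-robust with respect to the partition `P`:
it has coordinate sum `k`, and avoiding any set `W` of at most `βn` vertices there is
a copy of `F` whose vertex set has index vector `v`. -/
def RobustVec (F : SimpleGraph (Fin k)) (G : SimpleGraph (Fin n)) {C : ℕ}
    (P : Fin C → Finset (Fin n)) (β : ℝ) (v : Fin C → ℕ) : Prop :=
  (∑ i, v i) = k ∧
    ∀ W : Finset (Fin n), (W.card : ℝ) ≤ β * n →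
      ∃ S : Finset (Fin n), Disjoint S W ∧ SpansCopy F G S ∧ ∀ i, (S ∩ P i).card = v i

end RTT

theorem Finset.exists_two_lt_of_sum_lt {ι : Type*} [DecidableEq ι] {Q : Finset ι}
    (hQ : Q.Nonempty) (t : ι → ℝ) {M θ : ℝ} (hM : ∀ x ∈ Q, t x ≤ M)
    (h : M + (#Q - 1) * θ < ∑ x ∈ Q, t x) :
    ∃ v ∈ Q, ∃ w ∈ Q, v ≠ w ∧ θ < t v ∧ θ < t w := by
  obtain ⟨v, hv, hvmax⟩ := exists_max_image Q t hQ
  have hrest : ∑ _x ∈ Q.erase v, θ < ∑ x ∈ Q.erase v, t x := by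
    rw [sum_const, card_erase_of_mem hv, nsmul_eq_mul, Nat.cast_pred (card_pos.2 hQ)]
    linarith [add_sum_erase Q t hv, hM v hv]
  obtain ⟨w, hw, hθw⟩ := exists_lt_of_sum_lt hrest
  exact ⟨v, hv, w, mem_of_mem_erase hw, (ne_of_mem_erase hw).symm,
    hθw.trans_le (hvmax w (mem_of_mem_erase hw)), hθw⟩

namespace SimpleGraph

variable {V W : Type*} {G : SimpleGraph V}

theorem degree_eq_card_filter_add_card_filter_sdiff [Fintype V] [DecidableEq V]
    [DecidableRel G.Adj] (A : Finset V) (u : V) :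
    G.degree u = #{x ∈ A | G.Adj u x} + #{x ∈ univ \ A | G.Adj u x} := by
  rw [← card_neighborFinset_eq_degree, neighborFinset_eq_filter,
    ← card_union_of_disjoint (disjoint_filter_filter disjoint_sdiff), ← filter_union,
    union_sdiff_of_subset (subset_univ A)]

/-- Peeling off a vertex of degree `< d` together with its neighbourhood, and keeping the
vertex, builds the independent set. -/
theorem exists_le_degree_subset_or_exists_isIndepSet [DecidableEq V] [DecidableRel G.Adj]
    (d : ℕ) (S : Finset V) :
    (∃ S' ⊆ S, S'.Nonempty ∧ ∀ v ∈ S', d ≤ #{w ∈ S' | G.Adj v w}) ∨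
      ∃ I ⊆ S, G.IsIndepSet I ∧ #S ≤ d * #I := by
  induction S using Finset.strongInduction with
  | H S ih =>
    rcases S.eq_empty_or_nonempty with rfl | hne
    · exact .inr ⟨∅, empty_subset _, by simp [IsIndepSet], by simp⟩
    by_cases hall : ∀ v ∈ S, d ≤ #{w ∈ S | G.Adj v w}
    · exact .inl ⟨S, Subset.rfl, hne, hall⟩
    push Not at hall
    obtain ⟨v, hvS, hv⟩ := hall
    set N := ({w ∈ S | G.Adj v w} : Finset V)
    have hsub : S \ insert v N ⊂ S :=
      sdiff_ssubset (insert_subset hvS (filter_subset _ _)) ⟨v, mem_insert_self v N⟩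
    rcases ih _ hsub with ⟨S', hS', hS'ne, hdeg⟩ | ⟨I, hIS, hI, hcard⟩
    · exact .inl ⟨S', hS'.trans hsub.subset, hS'ne, hdeg⟩
    have hvI : ∀ w ∈ I, ¬ G.Adj v w := fun w hw hvw => (mem_sdiff.1 (hIS hw)).2
      (mem_insert_of_mem (mem_filter.2 ⟨(mem_sdiff.1 (hIS hw)).1, hvw⟩))
    have hvI' : v ∉ I := fun h => (mem_sdiff.1 (hIS h)).2 (mem_insert_self v N)
    refine .inr ⟨insert v I, insert_subset hvS (hIS.trans sdiff_subset), ?_, ?_⟩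
    · rw [coe_insert]
      exact hI.insert fun w hw _ => ⟨hvI w hw, fun h => hvI w hw h.symm⟩
    · have h1 : #S ≤ #(S \ insert v N) + #(insert v N) := card_le_card_sdiff_add_card
      have h2 := card_insert_le v N
      rw [card_insert_of_notMem hvI']
      nlinarith

theorem exists_isPath_of_le_degree [DecidableEq V] [DecidableRel G.Adj] {S : Finset V}
    (hS : S.Nonempty) {d : ℕ} (hdeg : ∀ v ∈ S, d ≤ #{w ∈ S | G.Adj v w}) :
    ∀ m ≤ d, ∃ (u v : V) (p : G.Walk u v),
      p.IsPath ∧ p.length = m ∧ ∀ x ∈ p.support, x ∈ S := by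
  intro m hm
  induction m with
  | zero =>
    obtain ⟨s, hs⟩ := hS
    exact ⟨s, s, .nil, .nil, rfl, by simpa using hs⟩
  | succ m ih =>
    obtain ⟨u, v, p, hp, hlen, hpS⟩ := ih (by omega)
    set N := ({w ∈ S | G.Adj u w} : Finset V)
    obtain ⟨w, hw⟩ : (N \ p.support.toFinset).Nonempty := by
      rw [← card_pos]
      have hle : #(N ∩ p.support.toFinset) ≤ m := by
        calc #(N ∩ p.support.toFinset) ≤ #(p.support.toFinset.erase u) :=
              card_le_card fun x hx => mem_erase.2 ⟨fun h => G.irrefl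
                (mem_filter.1 (h ▸ (mem_inter.1 hx).1)).2, (mem_inter.1 hx).2⟩
          _ = m := by
            rw [card_erase_of_mem (by simp), List.toFinset_card_of_nodup hp.support_nodup]
            simp [hlen]
      have hN : d ≤ #N := hdeg u (hpS u p.start_mem_support)
      have := card_sdiff_add_card_inter N p.support.toFinset
      omega
    rw [mem_sdiff, mem_filter, List.mem_toFinset] at hw
    refine ⟨w, v, .cons hw.1.2.symm p, hp.cons hw.2, by simp [hlen], ?_⟩
    simp only [Walk.support_cons, List.mem_cons, forall_eq_or_imp]
    exact ⟨hw.1.1, hpS⟩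

theorem Walk.IsPath.isCycle_cons_concat {a b v : V} {p : G.Walk a b} (hp : p.IsPath)
    (hlen : p.length ≠ 0) (hv : v ∉ p.support) (hva : G.Adj v a) (hbv : G.Adj b v) :
    (Walk.cons hva (p.concat hbv)).IsCycle := by
  refine (Walk.cons_isCycle_iff _ _).2 ⟨hp.concat hv hbv, fun he => ?_⟩
  simp only [Walk.edges_concat, List.concat_eq_append, List.mem_append, List.mem_singleton,
    Sym2.eq_iff] at he
  rcases he with he | ⟨rfl, -⟩ | ⟨-, rfl⟩
  · exact hv (p.fst_mem_support_of_mem_edges he)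
  · exact hv p.end_mem_support
  · exact hlen (by simpa using (hp.nil_iff_eq.2 rfl).eq_nil)

theorem Walk.IsCycle.isContained_induce {v : V} {c : G.Walk v v} (hc : c.IsCycle) {s : Set V}
    (hs : ∀ x ∈ c.support, x ∈ s) : cycleGraph c.length ⊑ G.induce s := by
  have hmap := Walk.map_induce c hs
  refine (cycleGraph_isContained_iff hc.three_le_length).2 ⟨_, c.induce s hs, ?_, ?_⟩
  · exact (Walk.isCycle_map_iff_of_injective (Embedding.induce (G := G) s).injective).1
      (hmap ▸ hc)
  · have := congrArg Walk.length hmap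
    rwa [Walk.length_map] at this

theorem Copy.exists_extend_leaf {T : SimpleGraph W} {ℓ p : W} (hℓp : ℓ ≠ p)
    (hp : ∀ x, T.Adj ℓ x → x = p) (g : Copy (T.induce {ℓ}ᶜ) G) {y : V}
    (hy : G.Adj (g ⟨p, hℓp.symm⟩) y) (hyg : y ∉ Set.range g) :
    ∃ f : Copy T G, Set.range f ⊆ insert y (Set.range g) := by
  classical
  let f : W → V := fun x => if hx : x = ℓ then y else g ⟨x, hx⟩
  have hf_ne : ∀ x (hx : x ≠ ℓ), f x = g ⟨x, hx⟩ := fun x hx => dif_neg hx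
  have hf_ℓ : f ℓ = y := dif_pos rfl
  have hleaf : ∀ b, T.Adj ℓ b → G.Adj (f ℓ) (f b) := by
    intro b h
    obtain rfl := hp b h
    rw [hf_ℓ, hf_ne _ hℓp.symm]
    exact hy.symm
  have hadj : ∀ a b, T.Adj a b → G.Adj (f a) (f b) := by
    intro a b h
    by_cases ha : a = ℓ
    · subst ha; exact hleaf b h
    by_cases hb : b = ℓ
    · subst hb; exact (hleaf a h.symm).symm
    rw [hf_ne a ha, hf_ne b hb]
    exact g.toHom.map_adj (by simpa using h)
  have hinj : Function.Injective f := by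
    intro a b hab
    by_cases ha : a = ℓ <;> by_cases hb : b = ℓ
    · rw [ha, hb]
    · rw [ha, hf_ℓ, hf_ne b hb] at hab; exact absurd ⟨_, hab.symm⟩ hyg
    · rw [hb, hf_ℓ, hf_ne a ha] at hab; exact absurd ⟨_, hab⟩ hyg
    · rw [hf_ne a ha, hf_ne b hb] at hab; exact congrArg Subtype.val (g.injective hab)
  refine ⟨⟨⟨f, hadj _ _⟩, hinj⟩, ?_⟩
  rintro _ ⟨x, rfl⟩
  by_cases hx : x = ℓ
  · subst hx; exact Or.inl hf_ℓ
  · exact Or.inr ⟨_, (hf_ne x hx).symm⟩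

/-- Remove a leaf `ℓ`, embed the rest by induction, and send `ℓ` to a neighbour of the image of
its parent outside the image: there is one, as the image has fewer than `|W| - 1` vertices
adjacent to that of the parent. -/
theorem IsTree.exists_copy_of_le_degree [Fintype W] {T : SimpleGraph W} (hT : T.IsTree)
    [DecidableRel G.Adj] {S : Finset V} (hS : S.Nonempty)
    (hdeg : ∀ v ∈ S, Fintype.card W - 1 ≤ #{w ∈ S | G.Adj v w}) :
    ∃ f : Copy T G, ∀ a, f a ∈ S := by
  classical
  induction hW : Fintype.card W generalizing W with
  | zero =>
    have : IsEmpty W := Fintype.card_eq_zero_iff.1 hW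
    exact absurd hT.connected.nonempty (not_nonempty_iff.2 this)
  | succ m ih =>
    rcases subsingleton_or_nontrivial W with hW1 | hW1
    · obtain ⟨s, hs⟩ := hS
      exact ⟨⟨⟨fun _ => s, fun h => (h.ne (Subsingleton.elim _ _)).elim⟩,
        fun a b _ => Subsingleton.elim a b⟩, fun _ => hs⟩
    obtain ⟨ℓ, hℓ⟩ := hT.exists_vert_degree_one_of_nontrivial
    obtain ⟨p, hℓp, hp⟩ := degree_eq_one_iff_existsUnique_adj.1 hℓ
    have hT' : (T.induce {ℓ}ᶜ).IsTree :=
      ⟨hT.connected.induce_compl_singleton_of_degree_eq_one hℓ, hT.isAcyclic.induce _⟩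
    have hcard : Fintype.card ({ℓ}ᶜ : Set W) = m := by
      rw [Fintype.card_compl_set]; simp [hW]
    obtain ⟨g, hgS⟩ := ih hT' (fun v hv => by have := hdeg v hv; omega) hcard
    set N := ({w ∈ S | G.Adj (g ⟨p, hℓp.ne'⟩) w} : Finset V)
    obtain ⟨y, hy⟩ : (N \ univ.image g).Nonempty := by
      rw [← card_pos]
      have hlt : #(N ∩ univ.image g) < #(univ.image g) := by
        refine card_lt_card ⟨inter_subset_right, fun h => ?_⟩
        have := mem_inter.1 (h (mem_image_of_mem g (mem_univ ⟨p, hℓp.ne'⟩)))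
        exact G.irrefl (mem_filter.1 this.1).2
      rw [card_image_of_injective _ (by exact g.injective), card_univ, hcard] at hlt
      have := card_sdiff_add_card_inter N (univ.image g)
      have hN : m ≤ #N := by simpa [hW] using hdeg _ (hgS _)
      omega
    rw [mem_sdiff, mem_filter] at hy
    obtain ⟨f, hf⟩ := g.exists_extend_leaf hℓp.ne hp hy.1.2 (by simpa using hy.2)
    refine ⟨f, fun a => ?_⟩
    rcases hf ⟨a, rfl⟩ with h | ⟨b, h⟩
    · exact h ▸ hy.1.1
    · exact h ▸ hgS b

end SimpleGraph

namespace RTT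

open SimpleGraph

variable {k n : ℕ} {F : SimpleGraph (Fin k)} {G : SimpleGraph (Fin n)}

lemma SpansCopy.card_eq {S : Finset (Fin n)} (h : SpansCopy F G S) : #S = k := by
  obtain ⟨f, hf, -, rfl⟩ := h
  simp [card_image_of_injective _ hf]

lemma SpansCopy.nonempty (hk : 0 < k) {S : Finset (Fin n)} (h : SpansCopy F G S) :
    S.Nonempty := by
  rw [← card_pos, h.card_eq]; exact hk

lemma exists_spansCopy_of_copy (f : Copy F G) {U : Finset (Fin n)}
    (hf : ∀ a, f a ∈ U) : ∃ S ⊆ U, SpansCopy F G S := by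
  refine ⟨univ.image f, fun x hx => ?_, f, f.injective, fun a b h => f.toHom.map_adj h, rfl⟩
  obtain ⟨a, -, rfl⟩ := mem_image.1 hx
  exact hf a

lemma exists_spansCopy_of_isContained_induce {U : Finset (Fin n)}
    (h : F ⊑ G.induce (U : Set (Fin n))) : ∃ S ⊆ U, SpansCopy F G S :=
  let ⟨f⟩ := h
  exists_spansCopy_of_copy ((Copy.induce G _).comp f) fun a => (f a).2

lemma _root_.SimpleGraph.IsNClique.spansCopy_top {S : Finset (Fin n)} (h : G.IsNClique k S) :
    SpansCopy (⊤ : SimpleGraph (Fin k)) G S := by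
  let e := (S.equivFinOfCardEq h.card_eq).symm
  refine ⟨fun i => e i, Subtype.val_injective.comp e.injective, fun a b hab => ?_, ?_⟩
  · exact h.isClique (e a).2 (e b).2 fun h' => hab.ne (e.injective (Subtype.ext h'))
  · ext x
    simp only [mem_image, mem_univ, true_and]
    exact ⟨fun ⟨a, ha⟩ => ha ▸ (e a).2, fun hx => ⟨e.symm ⟨x, hx⟩, by simp⟩⟩

lemma IsTiling.mono {T T' : Finset (Finset (Fin n))} (hT : IsTiling F G T) (h : T' ⊆ T) :
    IsTiling F G T' :=
  ⟨fun S hS => hT.1 S (h hS), fun S hS S' hS' => hT.2 S (h hS) S' (h hS')⟩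

lemma IsTiling.insert {T : Finset (Finset (Fin n))} (hT : IsTiling F G T) {S : Finset (Fin n)}
    (hS : SpansCopy F G S) (hdisj : ∀ Q ∈ T, Disjoint S Q) : IsTiling F G (insert S T) := by
  refine ⟨fun Q hQ => ?_, fun Q hQ Q' hQ' hne => ?_⟩
  · rcases mem_insert.1 hQ with rfl | hQ
    exacts [hS, hT.1 Q hQ]
  rcases mem_insert.1 hQ with h | h <;> rcases mem_insert.1 hQ' with h' | h'
  · exact absurd (h.trans h'.symm) hne
  · exact h ▸ hdisj Q' h'
  · exact h' ▸ (hdisj Q h).symm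
  · exact hT.2 Q h Q' h' hne

lemma SpansCopy.card_insert_of_disjoint (hk : 0 < k) {S : Finset (Fin n)} (hS : SpansCopy F G S)
    {T : Finset (Finset (Fin n))} (hdisj : ∀ Q ∈ T, Disjoint S Q) : #(insert S T) = #T + 1 :=
  card_insert_of_notMem fun h => (hS.nonempty hk).ne_empty (disjoint_self.1 (hdisj S h))

lemma IsTiling.disjoint_of_subset_union_uncovered {T : Finset (Finset (Fin n))}
    (hT : IsTiling F G T)
    {Q Q' : Finset (Fin n)} (hQ : Q ∈ T) (hQ' : Q' ∈ T) (hne : Q' ≠ Q) {X : Finset (Fin n)}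
    (hX : X ⊆ Q ∪ (univ \ T.biUnion id)) : Disjoint X Q' := by
  refine disjoint_of_subset_left hX (disjoint_union_left.2 ⟨hT.2 Q hQ Q' hQ' hne.symm, ?_⟩)
  exact sdiff_disjoint.mono_right (subset_biUnion_of_mem id hQ')

def IsMaximumTiling (F : SimpleGraph (Fin k)) (G : SimpleGraph (Fin n))
    (T : Finset (Finset (Fin n))) : Prop :=
  IsTiling F G T ∧ ∀ T', IsTiling F G T' → #T' ≤ #T

lemma exists_isMaximumTiling (F : SimpleGraph (Fin k)) (G : SimpleGraph (Fin n)) :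
    ∃ T, IsMaximumTiling F G T := by
  classical
  obtain ⟨T, hT, hmax⟩ := exists_max_image {T | IsTiling F G T} card
    ⟨∅, mem_filter.2 ⟨mem_univ _, by simp [IsTiling]⟩⟩
  exact ⟨T, (mem_filter.1 hT).2, fun T' hT' => hmax T' (mem_filter.2 ⟨mem_univ _, hT'⟩)⟩

lemma IsMaximumTiling.not_spansCopy (hk : 0 < k) {T : Finset (Finset (Fin n))}
    (hT : IsMaximumTiling F G T) {S : Finset (Fin n)} (hS : S ⊆ univ \ T.biUnion id) :
    ¬ SpansCopy F G S := fun hcopy => by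
  have hdisj : ∀ Q ∈ T, Disjoint S Q := fun Q hQ =>
    disjoint_of_subset_left hS (sdiff_disjoint.mono_right (subset_biUnion_of_mem id hQ))
  have := hT.2 _ (hT.1.insert hcopy hdisj)
  rw [hcopy.card_insert_of_disjoint hk hdisj] at this
  omega

/-- Replacing one tile by two new copies would enlarge a maximum tiling. -/
lemma IsMaximumTiling.not_swap (hk : 0 < k) {T : Finset (Finset (Fin n))}
    (hT : IsMaximumTiling F G T) {Q A B : Finset (Fin n)} (hQ : Q ∈ T)
    (hA : SpansCopy F G A) (hB : SpansCopy F G B) (hAB : Disjoint A B)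
    (hAQ : A ⊆ Q ∪ (univ \ T.biUnion id)) (hBQ : B ⊆ Q ∪ (univ \ T.biUnion id)) :
    False := by
  have hdisjA : ∀ Q' ∈ T.erase Q, Disjoint A Q' := fun Q' hQ' =>
    hT.1.disjoint_of_subset_union_uncovered hQ (mem_of_mem_erase hQ') (ne_of_mem_erase hQ') hAQ
  have hdisjB : ∀ Q' ∈ T.erase Q, Disjoint B Q' := fun Q' hQ' =>
    hT.1.disjoint_of_subset_union_uncovered hQ (mem_of_mem_erase hQ') (ne_of_mem_erase hQ') hBQ
  have hdisjA' : ∀ Q' ∈ insert B (T.erase Q), Disjoint A Q' := by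
    simpa only [forall_mem_insert] using ⟨hAB, hdisjA⟩
  have hT' := ((hT.1.mono (erase_subset Q T)).insert hB hdisjB).insert hA hdisjA'
  have := hT.2 _ hT'
  rw [hA.card_insert_of_disjoint hk hdisjA', hB.card_insert_of_disjoint hk hdisjB,
    card_erase_of_mem hQ] at this
  have := card_pos.2 ⟨Q, hQ⟩
  omega

theorem exists_tiling_of_forall_lt_card (hk : 0 < k) (β : ℝ)
    (h : ∀ U : Finset (Fin n), β < #U → ∃ S ⊆ U, SpansCopy F G S) :
    ∃ T, IsTiling F G T ∧ (#(univ \ T.biUnion id) : ℝ) ≤ β := by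
  obtain ⟨T, hT⟩ := exists_isMaximumTiling F G
  refine ⟨T, hT.1, not_lt.1 fun hβ => ?_⟩
  obtain ⟨S, hSU, hS⟩ := h _ hβ
  exact hT.not_spansCopy hk hSU hS

lemma IsTiling.card_mul_le {T : Finset (Finset (Fin n))} (hT : IsTiling F G T) : #T * k ≤ n := by
  have h := card_biUnion (s := T) (t := id) fun Q hQ Q' hQ' hne => hT.2 Q hQ Q' hQ' hne
  simp only [id] at h
  rw [sum_congr rfl fun Q hQ => (hT.1 Q hQ).card_eq, sum_const, smul_eq_mul] at h
  simpa [h] using card_le_univ (T.biUnion id)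

/-- Double counting the edges between `U` and the tiles gives a tile receiving more than
`(1 + (k - 1) θ) |U|` of them, since there are at most `n / k` tiles; as no vertex receives more
than `|U|`, two vertices of that tile receive more than `θ |U|` each. -/
lemma IsTiling.exists_two_vertices_many_neighbours [DecidableRel G.Adj] (hk : 0 < k)
    {T : Finset (Finset (Fin n))} (hT : IsTiling F G T) {U : Finset (Fin n)} (hU : U.Nonempty)
    {θ : ℝ} (hθ : 0 < θ)
    (hdeg : ∀ u ∈ U, (1 / k + θ) * n ≤ #{x ∈ T.biUnion id | G.Adj u x}) :
    ∃ Q ∈ T, ∃ v ∈ Q, ∃ w ∈ Q, v ≠ w ∧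
      θ * #U < #{u ∈ U | G.Adj u v} ∧ θ * #U < #{u ∈ U | G.Adj u w} := by
  set t : Fin n → ℝ := fun x => #{u ∈ U | G.Adj u x}
  have htotal :
      ∑ Q ∈ T, ∑ x ∈ Q, t x = ∑ u ∈ U, (#{x ∈ T.biUnion id | G.Adj u x} : ℝ) := by
    have := sum_card_bipartiteAbove_eq_sum_card_bipartiteBelow (s := U) (t := T.biUnion id) G.Adj
    calc ∑ Q ∈ T, ∑ x ∈ Q, t x = ∑ x ∈ T.biUnion id, t x :=
          (sum_biUnion fun Q hQ Q' hQ' hne => hT.2 Q hQ Q' hQ' hne).symm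
      _ = _ := by simp only [t]; exact_mod_cast this.symm
  have hkT : (k : ℝ) * #T ≤ n := by exact_mod_cast (mul_comm k _).trans_le hT.card_mul_le
  have hn : (0 : ℝ) < n := by exact_mod_cast Fin.pos hU.choose
  have hUpos : (0 : ℝ) < #U := by exact_mod_cast hU.card_pos
  have hkR : (1 : ℝ) ≤ k := by exact_mod_cast hk
  have hbound : (#T : ℝ) * (#U + (k - 1) * (θ * #U)) < #U * ((1 / k + θ) * n) := by
    refine lt_of_mul_lt_mul_left ?_ (by linarith : (0 : ℝ) ≤ k)
    calc (k : ℝ) * (#T * (#U + (k - 1) * (θ * #U)))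
        = (k * #T) * (#U * (1 + (k - 1) * θ)) := by ring
      _ ≤ n * (#U * (1 + (k - 1) * θ)) := by gcongr
      _ < n * (#U * (1 + k * θ)) := by gcongr; linarith
      _ = k * (#U * ((1 / k + θ) * n)) := by field_simp
  obtain ⟨Q, hQ, hQsum⟩ : ∃ Q ∈ T, #U + ((k : ℝ) - 1) * (θ * #U) < ∑ x ∈ Q, t x := by
    refine exists_lt_of_sum_lt ?_
    calc ∑ _Q ∈ T, (#U + ((k : ℝ) - 1) * (θ * #U)) < #U * ((1 / k + θ) * n) := by
          rwa [sum_const, nsmul_eq_mul]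
      _ = ∑ _u ∈ U, (1 / k + θ) * n := by rw [sum_const, nsmul_eq_mul]
      _ ≤ ∑ Q ∈ T, ∑ x ∈ Q, t x := htotal ▸ sum_le_sum hdeg
  have hQcard : #Q = k := (hT.1 Q hQ).card_eq
  refine ⟨Q, hQ, exists_two_lt_of_sum_lt ?_ t (M := #U) (fun x _ => ?_) (by rwa [hQcard])⟩
  · rw [← card_pos, hQcard]; exact hk
  · simp only [t]; exact_mod_cast card_filter_le U _

lemma IsMaximumTiling.card_filter_adj_le (hk : 0 < k) {T : Finset (Finset (Fin n))}
    (hT : IsMaximumTiling F G T) [DecidableRel G.Adj] {c : ℝ}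
    (hcopy : ∀ v (D : Finset (Fin n)), (∀ x ∈ D, G.Adj v x) → c < #D →
      ∃ S ⊆ insert v D, SpansCopy F G S)
    {u : Fin n} (hu : u ∈ univ \ T.biUnion id) :
    (#{w ∈ univ \ T.biUnion id | G.Adj u w} : ℝ) ≤ c := not_lt.1 fun h => by
  obtain ⟨S, hS, hSF⟩ := hcopy u _ (fun w hw => (mem_filter.1 hw).2) h
  exact hT.not_spansCopy hk (hS.trans (insert_subset hu (filter_subset _ _))) hSF

/-- A copy through `v` and, avoiding it, a copy through `w`, both otherwise uncovered, could
replace the tile `Q`. -/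
lemma IsMaximumTiling.not_two_vertices_many_neighbours (hk : 0 < k)
    {T : Finset (Finset (Fin n))} (hT : IsMaximumTiling F G T) [DecidableRel G.Adj] {c : ℝ}
    (hcopy : ∀ v (D : Finset (Fin n)), (∀ x ∈ D, G.Adj v x) → c < #D →
      ∃ S ⊆ insert v D, SpansCopy F G S)
    {Q : Finset (Fin n)} (hQ : Q ∈ T) {v w : Fin n} (hv : v ∈ Q) (hw : w ∈ Q) (hvw : v ≠ w)
    (htv : c < #{u ∈ univ \ T.biUnion id | G.Adj u v})
    (htw : c + k < #{u ∈ univ \ T.biUnion id | G.Adj u w}) : False := by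
  set U := univ \ T.biUnion id
  have hQU : Disjoint Q U := (sdiff_disjoint.mono_right (subset_biUnion_of_mem id hQ)).symm
  obtain ⟨A, hA, hAF⟩ := hcopy v _ (fun _ h => (mem_filter.1 h).2.symm) htv
  have hBbig : c < #({u ∈ U | G.Adj u w} \ A) := by
    have h : #{u ∈ U | G.Adj u w} ≤ #({u ∈ U | G.Adj u w} \ A) + #A :=
      card_le_card_sdiff_add_card
    rw [hAF.card_eq] at h
    have : (#{u ∈ U | G.Adj u w} : ℝ) ≤ #({u ∈ U | G.Adj u w} \ A) + k := by
      exact_mod_cast h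
    linarith
  obtain ⟨B, hB, hBF⟩ := hcopy w _ (fun _ h => (mem_filter.1 (mem_sdiff.1 h).1).2.symm) hBbig
  have hsub : ∀ x ∈ Q, ∀ D ⊆ U, insert x D ⊆ Q ∪ U := fun x hx D hD =>
    insert_subset (mem_union_left _ hx) (hD.trans subset_union_right)
  refine hT.not_swap hk hQ hAF hBF ?_ (hA.trans (hsub v hv _ (filter_subset _ _)))
    (hB.trans (hsub w hw _ (sdiff_subset.trans (filter_subset _ _))))
  refine disjoint_left.2 fun x hxA hxB => ?_
  rcases mem_insert.1 (hB hxB) with rfl | hx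
  · rcases mem_insert.1 (hA hxA) with h | h
    · exact hvw h.symm
    · exact disjoint_left.1 hQU hw (mem_filter.1 h).1
  · exact (mem_sdiff.1 hx).2 hxA

theorem exists_tiling_of_minDegree (hk : 0 < k) [DecidableRel G.Adj] {μ c β : ℝ} (hμ : 0 < μ)
    (hdeg : ∀ v, (1 / k + μ) * n ≤ G.degree v) (hc₀ : 0 ≤ c) (hc : c ≤ μ * n / 2)
    (hβ : c + k ≤ μ * β / 2)
    (hcopy : ∀ v (D : Finset (Fin n)), (∀ x ∈ D, G.Adj v x) → c < #D →
      ∃ S ⊆ insert v D, SpansCopy F G S) :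
    ∃ T, IsTiling F G T ∧ (#(univ \ T.biUnion id) : ℝ) ≤ β := by
  obtain ⟨T, hT⟩ := exists_isMaximumTiling F G
  refine ⟨T, hT.1, not_lt.1 fun hβU => ?_⟩
  set U := univ \ T.biUnion id
  have hcover : ∀ u ∈ U, (1 / k + μ / 2) * n ≤ #{x ∈ T.biUnion id | G.Adj u x} := by
    intro u hu
    have hsplit :
        (G.degree u : ℝ) = #{x ∈ T.biUnion id | G.Adj u x} + #{x ∈ U | G.Adj u x} := by
      exact_mod_cast G.degree_eq_card_filter_add_card_filter_sdiff (T.biUnion id) u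
    linarith [hdeg u, hT.card_filter_adj_le hk hcopy hu]
  have hcU : c + k < μ / 2 * #U := by nlinarith
  have hUne : U.Nonempty := by
    have : (0 : ℝ) < μ / 2 * #U := by linarith [(Nat.cast_pos.2 hk : (0 : ℝ) < k)]
    exact card_pos.1 (by exact_mod_cast pos_of_mul_pos_right this (half_pos hμ).le)
  obtain ⟨Q, hQ, v, hv, w, hw, hvw, htv, htw⟩ :=
    hT.1.exists_two_vertices_many_neighbours hk hUne (half_pos hμ) hcover
  exact hT.not_two_vertices_many_neighbours hk hcopy hQ hv hw hvw (by linarith) (by linarith)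

lemma MinDegGE.le_degree [DecidableRel G.Adj] {x : ℝ} (h : MinDegGE G x) (v : Fin n) :
    x ≤ G.degree v := by
  rw [← card_neighborFinset_eq_degree, neighborFinset_def, ← Set.ncard_eq_toFinset_card']
  exact h v

lemma IndepBound.exists_isNClique {r : ℕ} {x : ℝ} (h : IndepBound G r x) {D : Finset (Fin n)}
    (hD : x < #D) : ∃ C ⊆ D, G.IsNClique r C := by
  by_contra hC
  push Not at hC
  exact (h D hC).not_gt hD

lemma IndepBound.card_le_of_isIndepSet {x : ℝ} (h : IndepBound G 2 x) {I : Finset (Fin n)}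
    (hI : G.IsIndepSet I) : (#I : ℝ) ≤ x :=
  h I fun C hC hcl => by
    obtain ⟨a, b, hab, rfl⟩ := card_eq_two.1 hcl.card_eq
    exact hI (hC (by simp)) (hC (by simp)) hab (hcl.isClique (by simp) (by simp) hab)

lemma IndepBound.exists_le_degree_subset [DecidableRel G.Adj] {x : ℝ} (h : IndepBound G 2 x)
    {d : ℕ} {D : Finset (Fin n)} (hD : d * x < #D) :
    ∃ S ⊆ D, S.Nonempty ∧ ∀ v ∈ S, d ≤ #{w ∈ S | G.Adj v w} := by
  refine (exists_le_degree_subset_or_exists_isIndepSet d D).resolve_right ?_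
  rintro ⟨I, -, hI, hcard⟩
  have hD' : (#D : ℝ) ≤ d * #I := by exact_mod_cast hcard
  have hI' := h.card_le_of_isIndepSet hI
  have : (#D : ℝ) ≤ d * x := hD'.trans (by gcongr)
  linarith

lemma IndepBound.exists_spansCopy_of_isTree (hF : F.IsTree) {x : ℝ} (h : IndepBound G 2 x)
    {U : Finset (Fin n)} (hU : (k - 1 : ℕ) * x < #U) :
    ∃ S ⊆ U, SpansCopy F G S := by
  classical
  obtain ⟨S', hS'U, hne, hdeg⟩ := h.exists_le_degree_subset hU
  obtain ⟨f, hf⟩ := hF.exists_copy_of_le_degree hne (by simpa using hdeg)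
  obtain ⟨S, hS, hSF⟩ := exists_spansCopy_of_copy f hf
  exact ⟨S, hS.trans hS'U, hSF⟩

lemma IndepBound.exists_spansCopy_top (hk : 0 < k) {x : ℝ} (h : IndepBound G (k - 1) x)
    {v : Fin n} {D : Finset (Fin n)} (hD : ∀ y ∈ D, G.Adj v y) (hcard : x < #D) :
    ∃ S ⊆ insert v D, SpansCopy (⊤ : SimpleGraph (Fin k)) G S := by
  obtain ⟨C, hCD, hC⟩ := h.exists_isNClique hcard
  have hvC : G.IsNClique (k - 1 + 1) (insert v C) := hC.insert fun y hy => hD y (hCD hy)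
  rw [Nat.sub_add_cancel hk] at hvC
  exact ⟨_, insert_subset_insert v hCD, hvC.spansCopy_top⟩

/-- The copy is `v` followed by a path on `k - 1` vertices inside `D`. -/
lemma IndepBound.exists_spansCopy_cycleGraph (hk : 3 ≤ k) {x : ℝ} (h : IndepBound G 2 x)
    {v : Fin n} {D : Finset (Fin n)} (hD : ∀ y ∈ D, G.Adj v y)
    (hcard : (k - 2 : ℕ) * x < #D) : ∃ S ⊆ insert v D, SpansCopy (cycleGraph k) G S := by
  classical
  obtain ⟨S', hS'D, hne, hdeg⟩ := h.exists_le_degree_subset hcard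
  obtain ⟨a, b, p, hp, hlen, hpS⟩ := exists_isPath_of_le_degree hne hdeg (k - 2) le_rfl
  have hpD : ∀ y ∈ p.support, y ∈ D := fun y hy => hS'D (hpS y hy)
  have hv : v ∉ p.support := fun hv => G.irrefl (hD v (hpD v hv))
  have hc := hp.isCycle_cons_concat (by omega) hv (hD a (hpD a p.start_mem_support))
    (hD b (hpD b p.end_mem_support)).symm
  have hcD := hc.isContained_induce (s := ↑(insert v D)) fun y hy => by
    simp only [Walk.support_cons, Walk.support_concat, List.mem_cons, List.mem_append,
      List.mem_nil_iff, or_false] at hy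
    rcases hy with rfl | hy | rfl
    · exact mem_insert_self _ _
    · exact mem_insert_of_mem (hpD y hy)
    · exact mem_insert_self _ _
  rw [Walk.length_cons, Walk.length_concat, hlen, show k - 2 + 1 + 1 = k by omega] at hcD
  exact exists_spansCopy_of_isContained_induce hcD

def AlmostTilingProperty (F : SimpleGraph (Fin k)) (r : ℕ) (η δ : ℝ) : Prop :=
  ∃ α : ℝ, 0 < α ∧ ∃ N : ℕ, ∀ n : ℕ, N ≤ n →
    ∀ G : SimpleGraph (Fin n), MinDegGE G (η * n) → IndepBound G r (α * n) →
      ∃ T : Finset (Finset (Fin n)), IsTiling F G T ∧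
        ((Finset.univ \ T.biUnion id).card : ℝ) ≤ δ * n

lemma AlmostTilingProperty.mono {r : ℕ} {η η' δ : ℝ} (h : AlmostTilingProperty F r η δ)
    (hη : η ≤ η') : AlmostTilingProperty F r η' δ := by
  obtain ⟨α, hα, N, hN⟩ := h
  exact ⟨α, hα, N, fun n hn G hG hind =>
    hN n hn G (fun v => (mul_le_mul_of_nonneg_right hη n.cast_nonneg).trans (hG v)) hind⟩

lemma almostTilingProperty_top_self (hk : 0 < k) {δ : ℝ} (hδ : 0 < δ) (η : ℝ) :
    AlmostTilingProperty (⊤ : SimpleGraph (Fin k)) k η δ :=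
  ⟨δ, hδ, 0, fun _ _ _ _ hind => exists_tiling_of_forall_lt_card hk _ fun _ hU =>
    let ⟨C, hCU, hC⟩ := hind.exists_isNClique hU
    ⟨C, hCU, hC.spansCopy_top⟩⟩

lemma almostTilingProperty_of_isTree (hF : F.IsTree) {δ : ℝ} (hδ : 0 < δ) (η : ℝ) :
    AlmostTilingProperty F 2 η δ := by
  have hk : 0 < k := Fin.pos hF.connected.nonempty.some
  have hkR : (0 : ℝ) < k := by exact_mod_cast hk
  refine ⟨δ / k, by positivity, 0, fun n _ G _ hind =>
    exists_tiling_of_forall_lt_card hk _ fun U hU =>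
      hind.exists_spansCopy_of_isTree hF (lt_of_le_of_lt ?_ hU)⟩
  calc ((k - 1 : ℕ) : ℝ) * (δ / k * n) ≤ k * (δ / k * n) := by
        gcongr; exact_mod_cast k.sub_le 1
    _ = δ * n := by field_simp

lemma almostTilingProperty_of_forall_copy (hk : 0 < k) {r : ℕ} {μ δ : ℝ} (hμ : 0 < μ)
    (hδ : 0 < δ) (K : ℕ)
    (hcopy : ∀ {n : ℕ} (G : SimpleGraph (Fin n)) (x : ℝ), IndepBound G r x →
      ∀ v (D : Finset (Fin n)), (∀ y ∈ D, G.Adj v y) → K * x < #D →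
        ∃ S ⊆ insert v D, SpansCopy F G S) :
    AlmostTilingProperty F r (1 / k + μ) δ := by
  set m := min (μ / 2) (μ * δ / 4)
  have hm : 0 < m := by positivity
  have hKm : K * (m / (K + 1)) ≤ m := by
    rw [mul_div_assoc', div_le_iff₀ (by positivity)]
    nlinarith
  refine ⟨m / (K + 1), by positivity, ⌈4 * k / (μ * δ)⌉₊, fun n hn G hG hind => ?_⟩
  classical
  have hn : 4 * k / (μ * δ) ≤ n := (Nat.le_ceil _).trans (by exact_mod_cast hn)
  have hkn : (k : ℝ) ≤ μ * δ / 4 * n := by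
    rw [div_le_iff₀ (by positivity)] at hn
    linarith
  have hn0 : (0 : ℝ) ≤ n := n.cast_nonneg
  refine exists_tiling_of_minDegree (c := K * (m / (K + 1)) * n) hk hμ hG.le_degree
    (by positivity) ?_ ?_
    fun v D hD hDc => hcopy G _ hind v D hD (by rwa [mul_assoc] at hDc)
  · calc K * (m / (K + 1)) * n ≤ m * n := by gcongr
      _ ≤ μ / 2 * n := by gcongr; exact min_le_left _ _
      _ = μ * n / 2 := by ring
  · calc K * (m / (K + 1)) * n + k ≤ μ * δ / 4 * n + μ * δ / 4 * n :=
          add_le_add (mul_le_mul_of_nonneg_right (hKm.trans (min_le_right _ _)) hn0) hkn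
      _ = μ * (δ * n) / 2 := by ring

end RTT

open RTT in
/-- Existence of almost perfect tilings. -/
theorem almost_perfect_tilings :
    ∀ k r : ℕ, 3 ≤ k → ∀ F : SimpleGraph (Fin k), ∀ η : ℝ, 0 < η →
    ((F = ⊤ ∧ r = k) ∨
     (F = ⊤ ∧ r = k - 1 ∧ 1 / (k : ℝ) ≤ η) ∨
     (F.IsTree ∧ r = 2) ∨
     (F = SimpleGraph.cycleGraph k ∧ r = 2 ∧ 1 / (k : ℝ) ≤ η)) →
    ∀ δ μ : ℝ, 0 < δ → 0 < μ →
    ∃ α : ℝ, 0 < α ∧ ∃ N : ℕ, ∀ n : ℕ, N ≤ n →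
      ∀ G : SimpleGraph (Fin n),
        MinDegGE G ((η + μ) * n) → IndepBound G r (α * n) →
        ∃ T : Finset (Finset (Fin n)), IsTiling F G T ∧
          ((Finset.univ \ T.biUnion id).card : ℝ) ≤ δ * n := by
  intro k r hk F η _ hcase δ μ hδ hμ
  rcases hcase with ⟨rfl, rfl⟩ | ⟨rfl, rfl, hη⟩ | ⟨hF, rfl⟩ | ⟨rfl, rfl, hη⟩
  · exact almostTilingProperty_top_self (by omega) hδ _
  · refine (almostTilingProperty_of_forall_copy (by omega) hμ hδ 1
      fun _ _ hind _ _ hD hDc => hind.exists_spansCopy_top (by omega) hD ?_).mono (by linarith)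
    simpa using hDc
  · exact almostTilingProperty_of_isTree hF hδ _
  · exact (almostTilingProperty_of_forall_copy (by omega) hμ hδ (k - 2)
      fun _ _ hind _ _ hD hDc => hind.exists_spansCopy_cycleGraph hk hD hDc).mono
      (by linarith)
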